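/- Invariant 1 part (b) for the generic algorithm: for every reachable configuration of Algorithm GQME and every process p, if p is in the queue of M but is not the head, then: p is in phase DOORWAY iff p is not visible, p is in phase WAIT iff p is visible, and Wait[p] = true. -/

import Mathlib

/-- The phase of a process in Algorithm GQME. -/
inductive GPhase
  | nearNCS   -- after dequeue, before the next enqueue (includes the NCS)
  | doorway   -- between enqueue and isHead
  | wait
  | doneWait
  | noWait    -- after isHead returned true, before dequeue
deriving DecidableEq

/-- A configuration of Algorithm GQME: the state (Q, V) of the atomic MutexQueue M,
the Wait registers, the phase of each process, and the number of passages each process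
has started (incremented at its enqueue). -/
structure GConfig (N : ℕ) where
  Q : List (Fin N)
  V : Finset (Fin N)
  Wait : Fin N → Bool
  phase : Fin N → GPhase
  pass : Fin N → ℕ

/-- Initially the queue is empty, all Wait registers are true, all processes are in
NEAR_NCS, and no passages have been started. -/
def gInit (N : ℕ) : GConfig N :=
  ⟨[], ∅, fun _ => true, fun _ => GPhase.nearNCS, fun _ => 0⟩

/-- Events (shared-memory steps) of Algorithm GQME. -/
inductive GEv (N : ℕ)
  | enq (p : Fin N)                       -- M.enqueue()               (line 2)
  | isHeadT (p : Fin N)                   -- M.isHead() returns true   (line 3)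
  | isHeadF (p : Fin N)                   -- M.isHead() returns false  (line 3)
  | exitWait (p : Fin N)
  | deq (p : Fin N) (r : Option (Fin N))
deriving DecidableEq

/-- The transition relation of Algorithm GQME, following the pseudocode and the
(non-broken) MutexQueue transition function. -/
inductive GStep (N : ℕ) : GConfig N → GEv N → GConfig N → Prop
  | enq (c : GConfig N) (p : Fin N) :
      c.phase p = GPhase.nearNCS → p ∉ c.Q →
      GStep N c (GEv.enq p)
        { c with Q := c.Q ++ [p],
                 phase := Function.update c.phase p GPhase.doorway,
                 pass := Function.update c.pass p (c.pass p + 1) }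
  | isHeadT (c : GConfig N) (p : Fin N) :
      c.phase p = GPhase.doorway → p ∈ c.Q → p ∉ c.V → c.Q.head? = some p →
      GStep N c (GEv.isHeadT p)
        { c with V := insert p c.V,
                 phase := Function.update c.phase p GPhase.noWait }
  | isHeadF (c : GConfig N) (p : Fin N) :
      c.phase p = GPhase.doorway → p ∈ c.Q → p ∉ c.V → c.Q.head? ≠ some p →
      GStep N c (GEv.isHeadF p)
        { c with V := insert p c.V,
                 phase := Function.update c.phase p GPhase.wait }
  | exitWait (c : GConfig N) (p : Fin N) :
      c.phase p = GPhase.wait → c.Wait p = false →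
      GStep N c (GEv.exitWait p)
        { c with Wait := Function.update c.Wait p true,
                 phase := Function.update c.phase p GPhase.doneWait }
  | deq (c : GConfig N) (p : Fin N) (r : Option (Fin N)) :
      (c.phase p = GPhase.noWait ∨ c.phase p = GPhase.doneWait) →
      c.Q.head? = some p → p ∈ c.V →
      r = (match c.Q[1]? with
           | some q => if q ∈ c.V then some q else none
           | none => none) →
      GStep N c (GEv.deq p r)
        { c with Q := c.Q.tail, V := c.V.erase p,
                 Wait := (match r with
                          | some q => Function.update c.Wait q false
                          | none => c.Wait),
                 phase := Function.update c.phase p GPhase.nearNCS }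

/-- `GReaches N c H c'`: the history H of events leads from configuration c to c'. -/
inductive GReaches (N : ℕ) : GConfig N → List (GEv N) → GConfig N → Prop
  | nil (c : GConfig N) : GReaches N c [] c
  | cons {c c1 c2 : GConfig N} {e : GEv N} {l : List (GEv N)} :
      GStep N c e c1 → GReaches N c1 l c2 → GReaches N c (e :: l) c2

/-- A process is in the critical section iff it is between line 3/5 and line 7. -/
def inCS {N : ℕ} (c : GConfig N) (p : Fin N) : Prop :=
  c.phase p = GPhase.noWait ∨ c.phase p = GPhase.doneWait

/-! Part (b) is not inductive on its own; it drops out of a stronger inductive invariant: the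
queue is duplicate-free and holds exactly the processes outside NEAR_NCS, V holds exactly the
processes past the doorway, a process in the critical section heads the queue, and a cleared
register `Wait[q]` belongs to the head, which is in WAIT. A non-head queued process is then in
DOORWAY or WAIT, and visibility tells the two apart. The only delicate step is the dequeue: the
successor it signals is visible, hence past the doorway, and not the old head, hence not in the
critical section, so it is in WAIT. -/

namespace GPhase

@[simp]
def PastDoorway : GPhase → Prop
  | wait | doneWait | noWait => True
  | nearNCS | doorway => False

end GPhase

open GPhase Function

structure GInvariant {N : ℕ} (c : GConfig N) : Prop where
  nodup : c.Q.Nodup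
  mem_Q_iff : ∀ q, q ∈ c.Q ↔ c.phase q ≠ nearNCS
  mem_V_iff : ∀ q, q ∈ c.V ↔ (c.phase q).PastDoorway
  head_of_inCS : ∀ q, inCS c q → c.Q.head? = some q
  head_of_wait_false : ∀ q, c.Wait q = false → c.Q.head? = some q ∧ c.phase q = wait

namespace GInvariant

variable {N : ℕ} {c : GConfig N}

theorem init (N : ℕ) : GInvariant (gInit N) where
  nodup := List.nodup_nil
  mem_Q_iff _ := by simp [gInit]
  mem_V_iff _ := by simp [gInit]
  head_of_inCS _ := by simp [gInit, inCS]
  head_of_wait_false _ := by simp [gInit]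

theorem enq (hI : GInvariant c) {p : Fin N} (hp : c.phase p = nearNCS) (hpQ : p ∉ c.Q) :
    GInvariant { c with Q := c.Q ++ [p], phase := update c.phase p doorway,
                        pass := update c.pass p (c.pass p + 1) } where
  nodup := hI.nodup.append (List.nodup_singleton p) (by simpa using hpQ)
  mem_Q_iff q := by
    rcases eq_or_ne q p with rfl | hq <;> simp [*, hI.mem_Q_iff q]
  mem_V_iff q := by
    rcases eq_or_ne q p with rfl | hq <;> simp [*, hI.mem_V_iff q]
  head_of_inCS q hq := by
    rcases eq_or_ne q p with rfl | hqp
    · simp [inCS] at hq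
    · simp only [inCS, update_of_ne hqp] at hq
      simp [List.head?_append, hI.head_of_inCS q hq]
  head_of_wait_false q hq := by
    obtain ⟨hhead, hwait⟩ := hI.head_of_wait_false q hq
    have : q ≠ p := by rintro rfl; simp_all
    simp [List.head?_append, hhead, hwait, this]

theorem isHead (hI : GInvariant c) {p : Fin N} {ph : GPhase} (hp : c.phase p = doorway)
    (hph : ph.PastDoorway) (hcs : ph = noWait ∨ ph = doneWait → c.Q.head? = some p) :
    GInvariant { c with V := insert p c.V, phase := update c.phase p ph } where
  nodup := hI.nodup
  mem_Q_iff q := by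
    rcases eq_or_ne q p with rfl | hq
    · have : ph ≠ nearNCS := by rintro rfl; exact hph
      simp [this, (hI.mem_Q_iff q).2 (by simp [hp])]
    · simp [hq, hI.mem_Q_iff q]
  mem_V_iff q := by
    rcases eq_or_ne q p with rfl | hq
    · simpa using hph
    · simp [hq, hI.mem_V_iff q]
  head_of_inCS q hq := by
    rcases eq_or_ne q p with rfl | hqp
    · exact hcs (by simpa [inCS] using hq)
    · simp only [inCS, update_of_ne hqp] at hq
      exact hI.head_of_inCS q hq
  head_of_wait_false q hq := by
    obtain ⟨hhead, hwait⟩ := hI.head_of_wait_false q hq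
    have : q ≠ p := by rintro rfl; simp_all
    simp [hhead, hwait, this]

theorem exitWait (hI : GInvariant c) {p : Fin N} (hp : c.phase p = wait)
    (hw : c.Wait p = false) :
    GInvariant { c with Wait := update c.Wait p true, phase := update c.phase p doneWait } where
  nodup := hI.nodup
  mem_Q_iff q := by
    rcases eq_or_ne q p with rfl | hq <;> simp [*, hI.mem_Q_iff q]
  mem_V_iff q := by
    rcases eq_or_ne q p with rfl | hq <;> simp [*, hI.mem_V_iff q]
  head_of_inCS q hq := by
    rcases eq_or_ne q p with rfl | hqp
    · exact (hI.head_of_wait_false q hw).1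
    · simp only [inCS, update_of_ne hqp] at hq
      exact hI.head_of_inCS q hq
  head_of_wait_false q hq := by
    rcases eq_or_ne q p with rfl | hqp
    · simp at hq
    · simp only [update_of_ne hqp] at hq ⊢
      exact hI.head_of_wait_false q hq

theorem phase_eq_doorway_or_wait (hI : GInvariant c) {q : Fin N} (hq : q ∈ c.Q)
    (hh : c.Q.head? ≠ some q) : c.phase q = doorway ∨ c.phase q = wait := by
  have hNCS := (hI.mem_Q_iff q).1 hq
  have hCS : ¬ inCS c q := fun h => hh (hI.head_of_inCS q h)
  unfold inCS at hCS
  generalize c.phase q = ph at *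
  cases ph <;> simp_all

theorem wait_eq_true (hI : GInvariant c) {q : Fin N} (hh : c.Q.head? ≠ some q) :
    c.Wait q = true := by
  by_contra hw
  exact hh (hI.head_of_wait_false q (by simpa using hw)).1

theorem wait_eq_true_of_inCS (hI : GInvariant c) {p : Fin N} (hp : inCS c p) (q : Fin N) :
    c.Wait q = true := by
  by_contra hq
  obtain ⟨hqhead, hqwait⟩ := hI.head_of_wait_false q (by simpa using hq)
  obtain rfl : q = p := by simpa [hqhead] using hI.head_of_inCS p hp
  simp [inCS, hqwait] at hp

theorem deq (hI : GInvariant c) {p : Fin N} (hp : inCS c p) (hhead : c.Q.head? = some p)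
    {W : Fin N → Bool} (hW : ∀ q, W q = false → c.Q.tail.head? = some q ∧ q ∈ c.V) :
    GInvariant { c with Q := c.Q.tail, V := c.V.erase p, Wait := W,
                        phase := update c.phase p nearNCS } := by
  obtain ⟨t, hQ⟩ := List.head?_eq_some_iff.1 hhead
  have htail : c.Q.tail = t := by rw [hQ]; rfl
  obtain ⟨hpt, htnd⟩ := List.nodup_cons.1 (hQ ▸ hI.nodup)
  constructor
  · simpa [htail] using htnd
  · intro q
    rcases eq_or_ne q p with rfl | hqp
    · simp [htail, hpt]
    · simp [hqp, ← hI.mem_Q_iff, hQ]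
  · intro q
    rcases eq_or_ne q p with rfl | hqp <;> simp [*, hI.mem_V_iff q]
  · intro q hq
    rcases eq_or_ne q p with rfl | hqp
    · simp [inCS] at hq
    · simp only [inCS, update_of_ne hqp] at hq
      exact absurd (hhead.symm.trans (hI.head_of_inCS q hq)) (by simpa using hqp.symm)
  · intro q hq
    obtain ⟨hqhead, hqV⟩ := hW q hq
    have hqt : q ∈ t := List.mem_of_mem_head? (htail ▸ hqhead)
    have hqp : q ≠ p := by rintro rfl; exact hpt hqt
    have hqQ : q ∈ c.Q := hQ ▸ List.mem_cons_of_mem p hqt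
    refine ⟨hqhead, ?_⟩
    rcases hI.phase_eq_doorway_or_wait hqQ (by simpa [hhead] using hqp.symm) with h | h
    · simpa [h] using (hI.mem_V_iff q).1 hqV
    · simpa [update_of_ne hqp] using h

theorem step {c' : GConfig N} {e : GEv N} (hI : GInvariant c) (h : GStep N c e c') :
    GInvariant c' := by
  cases h with
  | enq p hp hpQ => exact hI.enq hp hpQ
  | isHeadT p hp _ _ hhead => exact hI.isHead hp trivial fun _ => hhead
  | isHeadF p hp _ _ _ => exact hI.isHead hp trivial (by simp)
  | exitWait p hp hw => exact hI.exitWait hp hw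
  | deq p r hp hhead _ hr =>
    refine hI.deq hp hhead fun q hq => ?_
    have hset := hI.wait_eq_true_of_inCS hp
    rw [List.head?_tail]
    subst hr
    rcases h1 : c.Q[1]? with _ | s
    · simp [h1, hset] at hq
    · by_cases hs : s ∈ c.V
      · obtain rfl : q = s := by
          by_contra hqs
          simp [h1, hs, update_of_ne hqs, hset] at hq
        exact ⟨rfl, hs⟩
      · simp [h1, hs, hset] at hq

theorem reaches {c' : GConfig N} {H : List (GEv N)} (hI : GInvariant c)
    (h : GReaches N c H c') :
    GInvariant c' := by
  induction h with
  | nil => exact hI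
  | cons hs _ ih => exact ih (hI.step hs)

end GInvariant

/-- Invariant 1 part (b): in every reachable configuration of Algorithm GQME, if process p
is in the queue of M but not its head, then p is in phase DOORWAY iff p is not visible,
p is in phase WAIT iff p is visible, and Wait[p] = true. -/
theorem invariant_part_b (N : ℕ) (H : List (GEv N)) (c : GConfig N)
    (hrun : GReaches N (gInit N) H c) (p : Fin N)
    (hp : p ∈ c.Q) (hnh : c.Q.head? ≠ some p) :
    (c.phase p = GPhase.doorway ↔ p ∉ c.V) ∧
    (c.phase p = GPhase.wait ↔ p ∈ c.V) ∧
    c.Wait p = true := by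
  have hI := (GInvariant.init N).reaches hrun
  rcases hI.phase_eq_doorway_or_wait hp hnh with h | h <;>
    simp [h, hI.mem_V_iff p, hI.wait_eq_true hnh]
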